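/- The free product (ℤ/2ℤ) * (ℤ/3ℤ) contains a free subgroup of rank 2. -/

import Mathlib

noncomputable section PingPongC2C3

open Monoid

namespace PingPongC2C3

/-- The space of irrational real numbers. -/
abbrev α : Type := {t : ℝ // Irrational t}

lemma oneSub {x : ℝ} (h : Irrational x) : Irrational (1 - x) := by
  simpa using h.intCast_sub 1

/-- The order-two Möbius map `t ↦ -t⁻¹` on irrationals. -/
def ex : Equiv.Perm α where
  toFun t := ⟨-(t.1)⁻¹, t.2.inv.neg⟩
  invFun t := ⟨-(t.1)⁻¹, t.2.inv.neg⟩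
  left_inv t := by ext; simp [inv_neg]
  right_inv t := by ext; simp [inv_neg]

/-- The order-three Möbius map `t ↦ (1 - t)⁻¹` on irrationals. -/
def ey : Equiv.Perm α where
  toFun t := ⟨(1 - t.1)⁻¹, (oneSub t.2).inv⟩
  invFun t := ⟨1 - (t.1)⁻¹, oneSub t.2.inv⟩
  left_inv t := by ext; simp
  right_inv t := by ext; simp

lemma ex_sq : ex ^ 2 = 1 := by
  ext t
  show (ex (ex t)).1 = t.1
  simp [ex, inv_neg]

lemma ey_cube : ey ^ 3 = 1 := by
  ext t
  show (ey (ey (ey t))).1 = t.1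
  have h0 : t.1 ≠ 0 := t.2.ne_zero
  have h1 : (1 : ℝ) - t.1 ≠ 0 := sub_ne_zero.2 (Ne.symm t.2.ne_one)
  have h2 : 1 - (1 - t.1)⁻¹ ≠ 0 := by
    intro h
    rw [sub_eq_zero] at h
    have h3 : (1 : ℝ) - t.1 = 1 := by
      rw [← inv_eq_one]
      exact h.symm
    exact h0 (by linarith)
  show (1 - (1 - (1 - t.1)⁻¹)⁻¹)⁻¹ = t.1
  have h4 : 1 - (1 - t.1)⁻¹ = -t.1 / (1 - t.1) := by field_simp; ring
  rw [h4]
  field_simp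
  ring

/-- The homomorphism from `ZMod n` sending the generator to an element of order dividing `n`. -/
def zmodHom {G : Type*} [Group G] {n : ℕ} [NeZero n] (e : G) (he : e ^ n = 1) :
    Multiplicative (ZMod n) →* G where
  toFun z := e ^ (Multiplicative.toAdd z).val
  map_one' := by simp
  map_mul' a b := by
    show e ^ ((Multiplicative.toAdd a + Multiplicative.toAdd b : ZMod n)).val = _
    rw [ZMod.val_add, ← pow_eq_pow_mod _ he, pow_add]

/-- The free product of `ZMod 2` and `ZMod 3`. -/
abbrev P : Type := Monoid.Coprod (Multiplicative (ZMod 2)) (Multiplicative (ZMod 3))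

/-- The action of the free product on irrationals through `ex` and `ey`. -/
def φ : P →* Equiv.Perm α := Coprod.lift (zmodHom ex ex_sq) (zmodHom ey ey_cube)

local instance : MulAction P α := MulAction.compHom _ φ

def x' : Multiplicative (ZMod 2) := Multiplicative.ofAdd 1
def y' : Multiplicative (ZMod 3) := Multiplicative.ofAdd 1

lemma inl_smul (t : α) : (Coprod.inl x' : P) • t = ex t := by
  show φ (Coprod.inl x') • t = ex t
  rw [φ, Coprod.lift_apply_inl]
  have h : zmodHom ex ex_sq x' = ex := by
    show ex ^ (Multiplicative.toAdd x').val = ex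
    norm_num [x', ZMod.val_one]
  rw [h]
  rfl

lemma inr_smul (t : α) : (Coprod.inr y' : P) • t = ey t := by
  show φ (Coprod.inr y') • t = ey t
  rw [φ, Coprod.lift_apply_inr]
  have h : zmodHom ey ey_cube y' = ey := by
    show ey ^ (Multiplicative.toAdd y').val = ey
    norm_num [y', ZMod.val_one]
  rw [h]
  rfl

/-- The two candidate free generators: `xyxy` and `yxyx`. -/
def a : Fin 2 → P :=
  ![Coprod.inl x' * (Coprod.inr y' * (Coprod.inl x' * Coprod.inr y')),
    Coprod.inr y' * (Coprod.inl x' * (Coprod.inr y' * Coprod.inl x'))]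

lemma a0_smul (t : α) : ((a 0) • t).1 = t.1 - 2 := by
  show ((Coprod.inl x' * (Coprod.inr y' * (Coprod.inl x' * Coprod.inr y')) : P) • t).1 = t.1 - 2
  rw [mul_smul, mul_smul, mul_smul, inr_smul, inl_smul, inr_smul, inl_smul]
  show -(1 - (-(1 - t.1)⁻¹⁻¹ : ℝ))⁻¹⁻¹ = t.1 - 2
  simp only [inv_inv]
  ring

lemma a1_smul (t : α) : ((a 1) • t).1 = t.1 / (2 * t.1 + 1) := by
  have h0 : t.1 ≠ 0 := t.2.ne_zero
  have h1 : 2 * t.1 + 1 ≠ 0 := by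
    intro h
    exact t.2.ne_rat (-1/2) (by push_cast; linarith)
  show ((Coprod.inr y' * (Coprod.inl x' * (Coprod.inr y' * Coprod.inl x')) : P) • t).1 = _
  rw [mul_smul, mul_smul, mul_smul, inl_smul, inr_smul, inl_smul, inr_smul]
  show (1 - (-(1 - (-(t.1)⁻¹ : ℝ))⁻¹⁻¹))⁻¹ = t.1 / (2 * t.1 + 1)
  simp only [inv_inv]
  have e1 : (1 : ℝ) - -(1 - -(t.1)⁻¹) = (2 * t.1 + 1) / t.1 := by
    field_simp
    ring
  rw [e1, inv_div]

lemma a0_inv_smul (t : α) : (((a 0)⁻¹) • t).1 = t.1 + 2 := by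
  have h := a0_smul ((a 0)⁻¹ • t)
  rw [smul_inv_smul] at h
  linarith

lemma a1_inv_smul_rel (t : α) :
    (((a 1)⁻¹) • t).1 * (1 - 2 * t.1) = t.1 := by
  have h := a1_smul ((a 1)⁻¹ • t)
  rw [smul_inv_smul] at h
  have h1 : 2 * (((a 1)⁻¹ • t : α)).1 + 1 ≠ 0 := by
    intro hh
    exact (((a 1)⁻¹ • t : α)).2.ne_rat (-1/2) (by push_cast; linarith)
  have h2 := (div_eq_iff h1).mp h.symm
  linear_combination h2

/-- The ping-pong sets. -/
def X : Fin 2 → Set α := ![{t | t.1 < -1}, {t | 0 < t.1 ∧ t.1 < 1}]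
def Y : Fin 2 → Set α := ![{t | 1 < t.1}, {t | -1 < t.1 ∧ t.1 < 0}]

lemma sqrt2_irr : Irrational (Real.sqrt 2) := irrational_sqrt_two

lemma one_lt_sqrt2 : (1 : ℝ) < Real.sqrt 2 := by
  nlinarith [Real.sq_sqrt (by norm_num : (2:ℝ) ≥ 0), Real.sqrt_nonneg 2]

lemma sqrt2_lt_two : Real.sqrt 2 < 2 := by
  nlinarith [Real.sq_sqrt (by norm_num : (2:ℝ) ≥ 0), Real.sqrt_nonneg 2]

lemma X0_mem {t : α} : t ∈ X 0 ↔ t.1 < -1 := Iff.rfl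
lemma X1_mem {t : α} : t ∈ X 1 ↔ 0 < t.1 ∧ t.1 < 1 := Iff.rfl
lemma Y0_mem {t : α} : t ∈ Y 0 ↔ 1 < t.1 := Iff.rfl
lemma Y1_mem {t : α} : t ∈ Y 1 ↔ -1 < t.1 ∧ t.1 < 0 := Iff.rfl

lemma hXdisj : Pairwise (Function.onFun Disjoint X) := by
  have h01 : Disjoint (X 0) (X 1) := by
    rw [Set.disjoint_left]
    intro t h1 h2
    rw [X0_mem] at h1; rw [X1_mem] at h2
    linarith [h2.1]
  intro i j hij
  fin_cases i <;> fin_cases j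
  · exact absurd rfl hij
  · exact h01
  · exact h01.symm
  · exact absurd rfl hij

lemma hYdisj : Pairwise (Function.onFun Disjoint Y) := by
  have h01 : Disjoint (Y 0) (Y 1) := by
    rw [Set.disjoint_left]
    intro t h1 h2
    rw [Y0_mem] at h1; rw [Y1_mem] at h2
    linarith [h2.2]
  intro i j hij
  fin_cases i <;> fin_cases j
  · exact absurd rfl hij
  · exact h01
  · exact h01.symm
  · exact absurd rfl hij

lemma hXYdisj : ∀ i j, Disjoint (X i) (Y j) := by
  intro i j
  fin_cases i <;> fin_cases j <;> rw [Set.disjoint_left] <;> intro t h1 h2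
  · have a1 : t.1 < -1 := h1
    have a2 : (1:ℝ) < t.1 := h2
    linarith
  · have a1 : t.1 < -1 := h1
    have a2 : -1 < t.1 ∧ t.1 < 0 := h2
    linarith [a2.1]
  · have a1 : 0 < t.1 ∧ t.1 < 1 := h1
    have a2 : (1:ℝ) < t.1 := h2
    linarith [a1.2]
  · have a1 : 0 < t.1 ∧ t.1 < 1 := h1
    have a2 : -1 < t.1 ∧ t.1 < 0 := h2
    linarith [a1.1, a2.2]

theorem injective_free : Function.Injective (FreeGroup.lift a) := by
  apply FreeGroup.injective_lift_of_ping_pong a X Y _ hXdisj hYdisj hXYdisj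
  · -- a i • (Y i)ᶜ ⊆ X i
    intro i
    fin_cases i
    · rintro u ⟨t, ht, rfl⟩
      have ht' : ¬ (1:ℝ) < t.1 := ht
      have htne : t.1 ≠ 1 := t.2.ne_one
      show ((a 0) • t).1 < -1
      rw [a0_smul]
      have h2 : t.1 < 1 := lt_of_le_of_ne (not_lt.mp ht') htne
      linarith
    · rintro u ⟨t, ht, rfl⟩
      have ht' : ¬ (t ∈ Y 1) := ht
      have h0 : t.1 ≠ 0 := t.2.ne_zero
      have hm1 : t.1 ≠ -1 := fun h => t.2.ne_rat (-1) (by push_cast; linarith)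
      have hcase : t.1 < -1 ∨ 0 < t.1 := by
        rcases lt_trichotomy t.1 (-1) with h | h | h
        · exact Or.inl h
        · exact absurd h hm1
        · rcases lt_trichotomy t.1 0 with h2 | h2 | h2
          · exact absurd (Y1_mem.mpr ⟨h, h2⟩) ht'
          · exact absurd h2 h0
          · exact Or.inr h2
      show 0 < ((a 1) • t).1 ∧ ((a 1) • t).1 < 1
      rw [a1_smul]
      rcases hcase with h | h
      · have hd : 2 * t.1 + 1 < 0 := by linarith
        exact ⟨div_pos_of_neg_of_neg (by linarith) hd,
          by rw [div_lt_one_of_neg hd]; linarith⟩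
      · have hd : 0 < 2 * t.1 + 1 := by linarith
        exact ⟨div_pos h hd, by rw [div_lt_one hd]; linarith⟩
  · -- a⁻¹ i • (X i)ᶜ ⊆ Y i
    intro i
    fin_cases i
    · rintro u ⟨t, ht, rfl⟩
      have ht' : ¬ t.1 < -1 := ht
      have hne : t.1 ≠ -1 := fun h => t.2.ne_rat (-1) (by push_cast; linarith)
      show (1:ℝ) < (((a 0)⁻¹ : P) • t).1
      rw [a0_inv_smul]
      have h2 : -1 < t.1 := lt_of_le_of_ne (not_lt.mp ht') (Ne.symm hne)
      linarith
    · rintro u ⟨t, ht, rfl⟩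
      have ht' : ¬ (t ∈ X 1) := ht
      have h0 : t.1 ≠ 0 := t.2.ne_zero
      have h1 : t.1 ≠ 1 := t.2.ne_one
      have hcase : t.1 < 0 ∨ 1 < t.1 := by
        rcases lt_trichotomy t.1 0 with h | h | h
        · exact Or.inl h
        · exact absurd h h0
        · rcases lt_trichotomy t.1 1 with h2 | h2 | h2
          · exact absurd (X1_mem.mpr ⟨h, h2⟩) ht'
          · exact absurd h2 h1
          · exact Or.inr h2
      have hrel := a1_inv_smul_rel t
      show -1 < (((a 1)⁻¹ : P) • t).1 ∧ (((a 1)⁻¹ : P) • t).1 < 0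
      set s : α := ((a 1)⁻¹ : P) • t with hsdef
      have key : (s.1 + 1) * (1 - 2 * t.1) = 1 - t.1 := by linear_combination hrel
      rcases hcase with h | h
      · have hd : 0 < 1 - 2 * t.1 := by linarith
        constructor
        · nlinarith [key, hd]
        · nlinarith [hrel, hd]
      · have hd : 1 - 2 * t.1 < 0 := by linarith
        constructor
        · nlinarith [key, hd]
        · nlinarith [hrel, hd]
  · -- nonempty
    intro i
    fin_cases i
    · refine ⟨⟨-Real.sqrt 2, sqrt2_irr.neg⟩, ?_⟩
      show -Real.sqrt 2 < -1
      linarith [one_lt_sqrt2]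
    · refine ⟨⟨Real.sqrt 2 - 1, by simpa using sqrt2_irr.sub_intCast 1⟩, ?_⟩
      show (0:ℝ) < Real.sqrt 2 - 1 ∧ Real.sqrt 2 - 1 < 1
      constructor
      · linarith [one_lt_sqrt2]
      · linarith [sqrt2_lt_two]

end PingPongC2C3

end PingPongC2C3

/-- The free product `(ℤ/2ℤ) * (ℤ/3ℤ)` contains a free subgroup of rank 2. -/
theorem stmt_3 :
    ∃ g : FreeGroup (Fin 2) →*
        Monoid.Coprod (Multiplicative (ZMod 2)) (Multiplicative (ZMod 3)),
      Function.Injective g := by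
  exact ⟨FreeGroup.lift PingPongC2C3.a, PingPongC2C3.injective_free⟩
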